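/- arXiv:2505.09293 — 2 statements merged into one kernel-verified Lean document; each statement's English description precedes it below -/
import Mathlib

section
/- Fourier transform of the Hamming variety surface measure: let j ∈ F*, μ_j the uniform probability measure on H_j = {x ∈ F^d : ∏ x_k = j}, and for m ∈ F^d let ℓ_m be the number of zero coordinates of m. If 1 ≤ ℓ_m ≤ d, then μ̂_j(m) = (−1)^{d−ℓ_m} (|F|−1)^{−(d−ℓ_m)}. -/
/-!
Choose a coordinate `i₀` with `m i₀ = 0`. Since `j ≠ 0`, a point of `H_j` is determined by its
other coordinates, which range freely over `Fˣ`, and the character `x ↦ χ(-m·x)` does not see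
`x i₀`. Hence the sum over `H_j` factors into the `d - 1` sums `∑_{t ≠ 0} χ(-m_i t)`, which equal
`|F| - 1` when `m_i = 0` and `-1` otherwise, while `|H_j| = (|F| - 1)^(d - 1)`.
-/

open Finset

lemma AddChar.map_sum_eq_prod {A M ι : Type*} [AddCommMonoid A] [CommMonoid M]
    (ψ : AddChar A M) (s : Finset ι) (f : ι → A) :
    ψ (∑ i ∈ s, f i) = ∏ i ∈ s, ψ (f i) :=
  map_prod ψ.toMonoidHom (fun i => Multiplicative.ofAdd (f i)) s

lemma AddChar.sum_erase_zero_mul {F R : Type*} [Field F] [Fintype F] [DecidableEq F]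
    [CommRing R] [IsDomain R] {ψ : AddChar F R} (hψ : ψ ≠ 1) (b : F) :
    ∑ t ∈ univ.erase 0, ψ (t * b) = if b = 0 then (Fintype.card F : R) - 1 else -1 := by
  rw [sum_erase_eq_sub (mem_univ _), sum_mulShift b (IsPrimitive.of_ne_one hψ)]
  split_ifs <;> simp

def hammingVariety (ι : Type*) {G : Type*} [Fintype ι] [DecidableEq ι] [CommMonoid G]
    [Fintype G] [DecidableEq G] (j : G) : Finset (ι → G) :=
  univ.filter fun x => ∏ i, x i = j

section HammingVariety

variable {ι G : Type*} [Fintype ι] [DecidableEq ι]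
  [CommGroupWithZero G] [Fintype G] [DecidableEq G]

lemma sum_hammingVariety_eq_sum_piFinset {M : Type*} [AddCommMonoid M]
    (i₀ : ι) {j : G} (hj : j ≠ 0) (g : ({i // i ≠ i₀} → G) → M) :
    ∑ x ∈ hammingVariety ι j, g (fun i => x i) =
      ∑ y ∈ Fintype.piFinset (fun _ => univ.erase 0), g y := by
  set e := Equiv.funSplitAt i₀ G
  have prod_eq (x : ι → G) : ∏ i, x i = (e x).1 * ∏ i, (e x).2 i :=
    Fintype.prod_eq_mul_prod_subtype_ne x i₀
  refine sum_nbij' (fun x => (e x).2) (fun y => e.symm (j / ∏ i, y i, y))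
    ?_ ?_ ?_ ?_ (fun _ _ => rfl)
  · intro x hx
    have hx : ∏ i, x i ≠ 0 := (mem_filter.1 hx).2 ▸ hj
    simpa [e] using fun i _ => prod_ne_zero_iff.1 hx i (mem_univ i)
  · intro y hy
    have hy : ∏ i, y i ≠ 0 :=
      prod_ne_zero_iff.2 fun i _ => by simpa using Fintype.mem_piFinset.1 hy i
    simp [hammingVariety, prod_eq, hy]
  · intro x hx
    have hx : (e x).1 * ∏ i, (e x).2 i = j := prod_eq x ▸ (mem_filter.1 hx).2
    have hP : ∏ i, (e x).2 i ≠ 0 := right_ne_zero_of_mul (hx ▸ hj)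
    exact e.symm_apply_eq.2 (Prod.ext (div_eq_of_eq_mul hP hx.symm) rfl)
  · intro y _
    simp

lemma card_hammingVariety [Nonempty ι] {j : G} (hj : j ≠ 0) :
    #(hammingVariety ι j) = (Fintype.card G - 1) ^ (Fintype.card ι - 1) := by
  obtain ⟨i₀⟩ := ‹Nonempty ι›
  have h := sum_hammingVariety_eq_sum_piFinset i₀ hj (fun _ => (1 : ℕ))
  rw [sum_const, sum_const] at h
  simpa using h

end HammingVariety

section Fourier

variable {ι F R : Type*} [Fintype ι] [DecidableEq ι] [Field F] [Fintype F] [DecidableEq F]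

lemma sum_hammingVariety_addChar [CommRing R] [IsDomain R] {ψ : AddChar F R} (hψ : ψ ≠ 1)
    {j : F} (hj : j ≠ 0) {m : ι → F} {i₀ : ι} (hi₀ : m i₀ = 0) :
    ∑ x ∈ hammingVariety ι j, ψ (-(∑ i, m i * x i)) =
      ∏ i : {i // i ≠ i₀}, if m i = 0 then (Fintype.card F : R) - 1 else -1 := by
  have hsummand (x : ι → F) : ψ (-(∑ i, m i * x i)) = ∏ i : {i // i ≠ i₀}, ψ (x i * -m i) := by
    rw [Fintype.sum_eq_add_sum_subtype_ne _ i₀, hi₀, zero_mul, zero_add, ← sum_neg_distrib,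
      AddChar.map_sum_eq_prod]
    simp only [mul_neg, mul_comm]
  rw [sum_congr rfl fun x _ => hsummand x,
    sum_hammingVariety_eq_sum_piFinset i₀ hj (fun y => ∏ i, ψ (y i * -m i)),
    ← prod_univ_sum (fun _ => univ.erase 0) (fun (i : {i // i ≠ i₀}) t => ψ (t * -m i))]
  refine prod_congr rfl fun i _ => ?_
  simp only [AddChar.sum_erase_zero_mul hψ, neg_eq_zero]

lemma fourier_hammingVariety [Field R] [CharZero R] {ψ : AddChar F R} (hψ : ψ ≠ 1)
    {j : F} (hj : j ≠ 0) {m : ι → F} {i₀ : ι} (hi₀ : m i₀ = 0) :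
    (#(hammingVariety ι j) : R)⁻¹ * ∑ x ∈ hammingVariety ι j, ψ (-(∑ i, m i * x i)) =
      ∏ i, if m i = 0 then 1 else -((Fintype.card F : R) - 1)⁻¹ := by
  set q₁ : R := (Fintype.card F : R) - 1
  have hq₁ : q₁ ≠ 0 := sub_ne_zero.2 (by exact_mod_cast Fintype.one_lt_card.ne')
  have : Nonempty ι := ⟨i₀⟩
  have hcard : (#(hammingVariety ι j) : R) = q₁ ^ Fintype.card {i // i ≠ i₀} := by
    rw [card_hammingVariety hj]
    simp [q₁, Nat.cast_sub Fintype.card_pos, Fintype.card_subtype_compl]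
  calc (#(hammingVariety ι j) : R)⁻¹ * ∑ x ∈ hammingVariety ι j, ψ (-(∑ i, m i * x i))
      = ∏ i : {i // i ≠ i₀}, (if m i = 0 then q₁ else -1) / q₁ := by
        rw [hcard, sum_hammingVariety_addChar hψ hj hi₀, prod_div_distrib, prod_const, card_univ,
          div_eq_inv_mul]
    _ = ∏ i, (if m i = 0 then q₁ else -1) / q₁ := by
        rw [Fintype.prod_eq_mul_prod_subtype_ne _ i₀, if_pos hi₀, div_self hq₁, one_mul]
    _ = ∏ i, if m i = 0 then 1 else -q₁⁻¹ := by
        refine prod_congr rfl fun i _ => ?_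
        split_ifs
        · exact div_self hq₁
        · rw [neg_div, one_div]

end Fourier

theorem hamming_fourier_general (F : Type*) [Field F] [Fintype F] [DecidableEq F]
    (d : ℕ) (χ : AddChar F ℂ) (hχ : χ ≠ 1) (j : F) (hj : j ≠ 0)
    (m : Fin d → F) (hm : 1 ≤ (univ.filter (fun k => m k = 0)).card) :
    ((univ.filter (fun x : Fin d → F => ∏ k, x k = j)).card : ℂ)⁻¹ *
        ∑ x ∈ univ.filter (fun x : Fin d → F => ∏ k, x k = j),
          χ (-(∑ i, m i * x i)) =
      (-1 : ℂ) ^ (d - (univ.filter (fun k => m k = 0)).card) *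
        (((Fintype.card F : ℂ) - 1) ^ (d - (univ.filter (fun k => m k = 0)).card))⁻¹ := by
  obtain ⟨i₀, hi₀⟩ := card_pos.1 hm
  refine (fourier_hammingVariety hχ hj (mem_filter.1 hi₀).2).trans ?_
  rw [prod_ite, prod_const_one, one_mul, prod_const, filter_not, card_univ_sdiff,
    Fintype.card_fin, neg_pow', inv_pow, mul_comm]

/-- Fourier transform of the surface measure on the Hamming variety
`H_j = {x ∈ F^d : ∏ x_k = j}` (`j ≠ 0`): if `ℓ_m ≥ 1` is the number of zero
coordinates of `m`, then `μ̂_j(m) = (−1)^{d−ℓ_m} (|F|−1)^{−(d−ℓ_m)}`. -/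
theorem hamming_fourier (F : Type*) [Field F] [Fintype F] [DecidableEq F]
    (d : ℕ) (hd : 1 ≤ d) (χ : AddChar F ℂ) (hχ : χ ≠ 1) (j : F) (hj : j ≠ 0)
    (m : Fin d → F) (hm : 1 ≤ (univ.filter (fun k => m k = 0)).card) :
    ((univ.filter (fun x : Fin d → F => ∏ k, x k = j)).card : ℂ)⁻¹ *
        ∑ x ∈ univ.filter (fun x : Fin d → F => ∏ k, x k = j),
          χ (-(∑ i, m i * x i)) =
      (-1 : ℂ) ^ (d - (univ.filter (fun k => m k = 0)).card) *
        (((Fintype.card F : ℂ) - 1) ^ (d - (univ.filter (fun k => m k = 0)).card))⁻¹ :=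
  hamming_fourier_general F d χ hχ j hj m hm
end

section
/- Restriction estimate for large Sidon sets: let E ⊆ F^d be a Sidon set with |E| ≥ c·|F|^{d/2} for some constant c > 0, and let μ be the surface measure on E. Then ‖(fμ)^∧‖_{L^8(F^d)} ≤ C(c,d)·‖f‖_{L²(μ)} for all f: F^d → ℂ, with C(c,d) independent of |F|. -/
open Finset

/-- The finite field Fourier transform: `ĝ(ξ) = Σ_x g(x) χ(−ξ·x)`. -/
noncomputable def dft {F : Type*} [Field F] [Fintype F] {d : ℕ}
    (χ : AddChar F ℂ) (g : (Fin d → F) → ℂ) (ξ : Fin d → F) : ℂ :=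
  ∑ x : Fin d → F, g x * χ (-(∑ i, ξ i * x i))

/-- The surface (uniform probability) measure on `E ⊆ F^d`. -/
noncomputable def surfMeasure {F : Type*} [Field F] [Fintype F] [DecidableEq F]
    {d : ℕ} (E : Finset (Fin d → F)) (x : Fin d → F) : ℝ :=
  (if x ∈ E then (1 : ℝ) else 0) / E.card

/-!
Write `g = fμ`, so that `(fμ)^ = ĝ`. Since `ĝ² = (g ∗ g)^`, Plancherel gives
`Σ_ξ |ĝ(ξ)|⁴ = q^d Σ_s |g ∗ g(s)|²`. In a Sidon set every `s` has at most two representations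
`s = a + b`, so Cauchy–Schwarz gives `|g ∗ g(s)|² ≤ 2 (|g|² ∗ |g|²)(s)` and hence
`Σ |ĝ|⁴ ≤ 2 q^d ‖g‖₂⁴`. Combined with the trivial bound `|ĝ| ≤ ‖g‖₁ ≤ ‖f‖_{L²(μ)}` and
`‖g‖₂² = ‖f‖²_{L²(μ)} / |E|`, this yields `Σ |ĝ|⁸ ≤ 2 (q^d / |E|²) ‖f‖⁸_{L²(μ)}`, and
`|E| ≥ c q^{d/2}` bounds the factor by `2 / c²`.
-/

section Convolution

variable {G R : Type*} [AddCommGroup G] [Fintype G] [CommSemiring R]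

def addConv (g h : G → R) (s : G) : R := ∑ a, g a * h (s - a)

lemma sum_addConv_mul_addChar (g h : G → R) (ψ : AddChar G R) :
    ∑ s, addConv g h s * ψ s = (∑ a, g a * ψ a) * ∑ b, h b * ψ b := by
  simp_rw [addConv, sum_mul, mul_sum]
  rw [sum_comm]
  refine sum_congr rfl fun a _ => ?_
  rw [← Equiv.sum_comp (Equiv.addLeft a)]
  simp only [Equiv.coe_addLeft, add_sub_cancel_left, AddChar.map_add_eq_mul]
  exact sum_congr rfl fun b _ => by ring

lemma sum_addConv (g h : G → R) : ∑ s, addConv g h s = (∑ a, g a) * ∑ b, h b := by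
  simpa using sum_addConv_mul_addChar g h 1

end Convolution

section Sidon

variable {G : Type*} [AddCommGroup G]

def IsSidon (E : Finset G) : Prop :=
  ∀ a ∈ E, ∀ b ∈ E, ∀ c ∈ E, ∀ e ∈ E, a + b = c + e → (a = c ∧ b = e) ∨ (a = e ∧ b = c)

lemma IsSidon.card_filter_sub_mem_le_two [DecidableEq G] {E : Finset G} (hE : IsSidon E)
    (s : G) : #{a ∈ E | s - a ∈ E} ≤ 2 := by
  obtain hempty | ⟨a₀, ha₀⟩ := ({a ∈ E | s - a ∈ E} : Finset G).eq_empty_or_nonempty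
  · simp [hempty]
  have hsub : {a ∈ E | s - a ∈ E} ⊆ {a₀, s - a₀} := by
    intro a ha
    rw [mem_filter] at ha ha₀
    have := hE a ha.1 (s - a) ha.2 a₀ ha₀.1 (s - a₀) ha₀.2 (by abel)
    rcases this with ⟨h, -⟩ | ⟨h, -⟩ <;> simp [h]
  exact (card_le_card hsub).trans card_le_two

variable [Fintype G]

lemma IsSidon.norm_addConv_sq_le {E : Finset G} (hE : IsSidon E) {g : G → ℂ}
    (hg : ∀ x ∉ E, g x = 0) (s : G) :
    ‖addConv g g s‖ ^ 2 ≤ 2 * addConv (fun x => ‖g x‖ ^ 2) (fun x => ‖g x‖ ^ 2) s := by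
  classical
  set A : Finset G := {a ∈ E | s - a ∈ E}
  have hA : ∀ a ∉ A, ‖g a‖ * ‖g (s - a)‖ = 0 := by
    intro a ha
    simp only [A, mem_filter, not_and_or] at ha
    rcases ha with ha | ha <;> simp [hg _ ha]
  calc ‖addConv g g s‖ ^ 2 ≤ (∑ a ∈ A, ‖g a‖ * ‖g (s - a)‖) ^ 2 := by
        rw [sum_subset (subset_univ A) fun a _ ha => hA a ha]
        gcongr
        exact (norm_sum_le _ _).trans_eq (by simp_rw [norm_mul])
    _ ≤ #A * ∑ a ∈ A, (‖g a‖ * ‖g (s - a)‖) ^ 2 := sq_sum_le_card_mul_sum_sq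
    _ ≤ 2 * ∑ a, (‖g a‖ * ‖g (s - a)‖) ^ 2 := by
        gcongr
        · exact_mod_cast hE.card_filter_sub_mem_le_two s
        · exact subset_univ A
    _ = 2 * addConv (fun x => ‖g x‖ ^ 2) (fun x => ‖g x‖ ^ 2) s := by
        simp_rw [addConv, mul_pow]

lemma IsSidon.sum_norm_addConv_sq_le {E : Finset G} (hE : IsSidon E) {g : G → ℂ}
    (hg : ∀ x ∉ E, g x = 0) :
    ∑ s, ‖addConv g g s‖ ^ 2 ≤ 2 * (∑ x, ‖g x‖ ^ 2) ^ 2 := by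
  calc ∑ s, ‖addConv g g s‖ ^ 2
      ≤ ∑ s, 2 * addConv (fun x => ‖g x‖ ^ 2) (fun x => ‖g x‖ ^ 2) s :=
        sum_le_sum fun s _ => hE.norm_addConv_sq_le hg s
    _ = 2 * (∑ x, ‖g x‖ ^ 2) ^ 2 := by rw [← mul_sum, sum_addConv, sq]

end Sidon

section Fourier

variable {F : Type*} [Field F] [Fintype F] {d : ℕ}

def dftChar (χ : AddChar F ℂ) (ξ : Fin d → F) : AddChar (Fin d → F) ℂ where
  toFun x := χ (-(∑ i, ξ i * x i))
  map_zero_eq_one' := by simp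
  map_add_eq_mul' x y := by
    simp only [Pi.add_apply, mul_add, sum_add_distrib, neg_add, AddChar.map_add_eq_mul]

lemma dft_eq_sum_mul_dftChar (χ : AddChar F ℂ) (g : (Fin d → F) → ℂ) (ξ : Fin d → F) :
    dft χ g ξ = ∑ x, g x * dftChar χ ξ x := rfl

lemma sum_dftChar [DecidableEq F] {χ : AddChar F ℂ} (hχ : χ ≠ 1) (x : Fin d → F) :
    ∑ ξ, dftChar χ ξ x = if x = 0 then (Fintype.card F : ℂ) ^ d else 0 := by
  have hprod : ∀ ξ : Fin d → F, dftChar χ ξ x = ∏ i, χ (ξ i * -x i) := fun ξ => by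
    simp only [dftChar, AddChar.coe_mk, ← sum_neg_distrib, mul_neg, AddChar.map_sum_eq_prod]
  simp_rw [hprod]
  rw [← Fintype.prod_sum (fun i t => χ (t * -x i))]
  simp_rw [AddChar.sum_mulShift _ (AddChar.IsPrimitive.of_ne_one hχ), neg_eq_zero]
  push_cast
  rw [Fintype.prod_ite_zero, prod_const, card_univ, Fintype.card_fin]
  simp only [funext_iff, Pi.zero_apply]
  congr 1

lemma norm_dft_le (χ : AddChar F ℂ) (g : (Fin d → F) → ℂ) (ξ : Fin d → F) :
    ‖dft χ g ξ‖ ≤ ∑ x, ‖g x‖ :=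
  (norm_sum_le _ _).trans_eq <| sum_congr rfl fun x _ => by
    rw [norm_mul, AddChar.norm_apply, mul_one]

lemma dft_addConv (χ : AddChar F ℂ) (g h : (Fin d → F) → ℂ) (ξ : Fin d → F) :
    dft χ (addConv g h) ξ = dft χ g ξ * dft χ h ξ :=
  sum_addConv_mul_addChar g h (dftChar χ ξ)

theorem sum_norm_sq_dft {χ : AddChar F ℂ} (hχ : χ ≠ 1) (g : (Fin d → F) → ℂ) :
    ∑ ξ, ‖dft χ g ξ‖ ^ 2 = (Fintype.card F : ℝ) ^ d * ∑ x, ‖g x‖ ^ 2 := by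
  classical
  apply Complex.ofReal_injective
  push_cast
  have hexpand : ∀ ξ, dft χ g ξ * (starRingEnd ℂ) (dft χ g ξ) =
      ∑ x, ∑ y, g x * (starRingEnd ℂ) (g y) * dftChar χ ξ (x - y) := fun ξ => by
    simp only [dft_eq_sum_mul_dftChar, map_sum, map_mul, ← AddChar.map_neg_eq_conj, sum_mul_sum,
      sub_eq_add_neg, AddChar.map_add_eq_mul]
    exact sum_congr rfl fun x _ => sum_congr rfl fun y _ => by ring
  simp_rw [← Complex.mul_conj', hexpand]
  calc ∑ ξ, ∑ x, ∑ y, g x * (starRingEnd ℂ) (g y) * dftChar χ ξ (x - y)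
      = ∑ x, ∑ y, g x * (starRingEnd ℂ) (g y) * ∑ ξ, dftChar χ ξ (x - y) := by
        simp_rw [mul_sum]
        rw [sum_comm]
        exact sum_congr rfl fun x _ => sum_comm
    _ = _ := by
        simp only [sum_dftChar hχ, sub_eq_zero, mul_ite, mul_zero, sum_ite_eq, mem_univ,
          if_true, mul_sum]
        exact sum_congr rfl fun x _ => mul_comm _ _

end Fourier

section SidonMoments

variable {F : Type*} [Field F] [Fintype F] {d : ℕ} {χ : AddChar F ℂ} {E : Finset (Fin d → F)}
  {g : (Fin d → F) → ℂ}

theorem IsSidon.sum_norm_dft_pow_four_le (hχ : χ ≠ 1) (hE : IsSidon E)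
    (hg : ∀ x ∉ E, g x = 0) :
    ∑ ξ, ‖dft χ g ξ‖ ^ 4 ≤ 2 * (Fintype.card F : ℝ) ^ d * (∑ x, ‖g x‖ ^ 2) ^ 2 :=
  calc ∑ ξ, ‖dft χ g ξ‖ ^ 4 = ∑ ξ, ‖dft χ (addConv g g) ξ‖ ^ 2 := by
        simp_rw [dft_addConv, norm_mul, ← sq, ← pow_mul]
    _ = (Fintype.card F : ℝ) ^ d * ∑ s, ‖addConv g g s‖ ^ 2 := sum_norm_sq_dft hχ _
    _ ≤ (Fintype.card F : ℝ) ^ d * (2 * (∑ x, ‖g x‖ ^ 2) ^ 2) := by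
        gcongr
        exact hE.sum_norm_addConv_sq_le hg
    _ = 2 * (Fintype.card F : ℝ) ^ d * (∑ x, ‖g x‖ ^ 2) ^ 2 := by ring

theorem IsSidon.sum_norm_dft_pow_eight_le (hχ : χ ≠ 1) (hE : IsSidon E)
    (hg : ∀ x ∉ E, g x = 0) :
    ∑ ξ, ‖dft χ g ξ‖ ^ 8 ≤
      2 * (Fintype.card F : ℝ) ^ d * (∑ x, ‖g x‖) ^ 4 * (∑ x, ‖g x‖ ^ 2) ^ 2 :=
  calc ∑ ξ, ‖dft χ g ξ‖ ^ 8 = ∑ ξ, ‖dft χ g ξ‖ ^ 4 * ‖dft χ g ξ‖ ^ 4 := by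
        simp_rw [← pow_add]
    _ ≤ ∑ ξ, (∑ x, ‖g x‖) ^ 4 * ‖dft χ g ξ‖ ^ 4 := by
        gcongr with ξ
        exact norm_dft_le χ g ξ
    _ = (∑ x, ‖g x‖) ^ 4 * ∑ ξ, ‖dft χ g ξ‖ ^ 4 := (mul_sum _ _ _).symm
    _ ≤ (∑ x, ‖g x‖) ^ 4 * (2 * (Fintype.card F : ℝ) ^ d * (∑ x, ‖g x‖ ^ 2) ^ 2) := by
        gcongr
        exact hE.sum_norm_dft_pow_four_le hχ hg
    _ = _ := by ring

end SidonMoments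

section SurfaceMeasure

variable {F : Type*} [Field F] [Fintype F] [DecidableEq F] {d : ℕ} (E : Finset (Fin d → F))

lemma surfMeasure_nonneg (x : Fin d → F) : 0 ≤ surfMeasure E x := by
  unfold surfMeasure
  positivity

lemma surfMeasure_eq_zero_of_notMem {x : Fin d → F} (hx : x ∉ E) : surfMeasure E x = 0 := by
  simp [surfMeasure, hx]

lemma sum_surfMeasure_le_one : ∑ x, surfMeasure E x ≤ 1 := by
  simp only [surfMeasure, ← sum_div, sum_boole, filter_mem_eq_inter, univ_inter]
  exact div_self_le_one _

lemma surfMeasure_sq (x : Fin d → F) : surfMeasure E x ^ 2 = surfMeasure E x / #E := by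
  unfold surfMeasure
  split_ifs <;> ring

lemma sq_sum_mul_surfMeasure_le (u : (Fin d → F) → ℝ) :
    (∑ x, u x * surfMeasure E x) ^ 2 ≤ ∑ x, u x ^ 2 * surfMeasure E x :=
  calc (∑ x, u x * surfMeasure E x) ^ 2
      ≤ (∑ x, surfMeasure E x) * ∑ x, u x ^ 2 * surfMeasure E x :=
        sum_sq_le_sum_mul_sum_of_sq_le_mul _ (fun x _ => surfMeasure_nonneg E x)
          (fun x _ => mul_nonneg (sq_nonneg _) (surfMeasure_nonneg E x))
          (fun x _ => le_of_eq (by ring))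
    _ ≤ ∑ x, u x ^ 2 * surfMeasure E x :=
        mul_le_of_le_one_left (sum_nonneg fun x _ => mul_nonneg (sq_nonneg _)
          (surfMeasure_nonneg E x)) (sum_surfMeasure_le_one E)

end SurfaceMeasure

theorem IsSidon.sum_norm_dft_surfMeasure_pow_eight_le {F : Type*} [Field F] [Fintype F]
    [DecidableEq F] {d : ℕ} {χ : AddChar F ℂ} (hχ : χ ≠ 1) {E : Finset (Fin d → F)}
    (hE : IsSidon E) (f : (Fin d → F) → ℂ) :
    ∑ ξ, ‖dft χ (fun y => f y * surfMeasure E y) ξ‖ ^ 8 ≤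
      2 * ((Fintype.card F : ℝ) ^ d / #E ^ 2) * (∑ x, ‖f x‖ ^ 2 * surfMeasure E x) ^ 4 := by
  set M := ∑ x, ‖f x‖ ^ 2 * surfMeasure E x
  have hnorm : ∀ x, ‖f x * surfMeasure E x‖ = ‖f x‖ * surfMeasure E x := fun x => by
    rw [norm_mul, Complex.norm_real, Real.norm_of_nonneg (surfMeasure_nonneg E x)]
  have hL1 : (∑ x, ‖f x * surfMeasure E x‖) ^ 4 ≤ M ^ 2 := by
    simp_rw [hnorm, show 4 = 2 * 2 from rfl, pow_mul]
    gcongr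
    exact sq_sum_mul_surfMeasure_le E _
  have hL2 : ∑ x, ‖f x * surfMeasure E x‖ ^ 2 = M / #E := by
    simp_rw [hnorm, mul_pow, surfMeasure_sq, M, sum_div, mul_div_assoc]
  calc ∑ ξ, ‖dft χ (fun y => f y * surfMeasure E y) ξ‖ ^ 8
      ≤ 2 * (Fintype.card F : ℝ) ^ d * (∑ x, ‖f x * surfMeasure E x‖) ^ 4
          * (∑ x, ‖f x * surfMeasure E x‖ ^ 2) ^ 2 :=
        hE.sum_norm_dft_pow_eight_le hχ fun x hx => by
          simp [surfMeasure_eq_zero_of_notMem E hx]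
    _ ≤ 2 * (Fintype.card F : ℝ) ^ d * M ^ 2 * (M / #E) ^ 2 := by
        rw [hL2]
        gcongr
    _ = 2 * ((Fintype.card F : ℝ) ^ d / #E ^ 2) * M ^ 4 := by ring

lemma pow_div_sq_le_one_div_sq {q n c : ℝ} {d : ℕ} (hq : 0 < q) (hc : 0 < c)
    (h : c * q ^ ((d : ℝ) / 2) ≤ n) : q ^ d / n ^ 2 ≤ 1 / c ^ 2 := by
  have hqd : 0 < q ^ ((d : ℝ) / 2) := Real.rpow_pos_of_pos hq _
  have hn : 0 < n := (mul_pos hc hqd).trans_le h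
  have hsq : (q ^ ((d : ℝ) / 2)) ^ 2 = q ^ d := by
    rw [← Real.rpow_mul_natCast hq.le, ← Real.rpow_natCast]
    norm_num
  rw [div_le_div_iff₀ (by positivity) (by positivity), one_mul, mul_comm, ← hsq, ← mul_pow]
  exact pow_le_pow_left₀ (by positivity) h 2

theorem sidon_extension_general (d : ℕ) (c : ℝ) (hc : 0 < c) :
    ∃ C : ℝ, ∀ (F : Type) [Field F] [Fintype F] [DecidableEq F] (χ : AddChar F ℂ),
      χ ≠ 1 → ∀ E : Finset (Fin d → F),
      (∀ a ∈ E, ∀ b ∈ E, ∀ c' ∈ E, ∀ e ∈ E,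
        a + b = c' + e → (a = c' ∧ b = e) ∨ (a = e ∧ b = c')) →
      c * (Fintype.card F : ℝ) ^ ((d : ℝ) / 2) ≤ E.card →
      ∀ f : (Fin d → F) → ℂ,
        (∑ x : Fin d → F,
            ‖dft χ (fun y => f y * surfMeasure E y) x‖ ^ (8 : ℝ)) ^
            ((1 : ℝ) / 8) ≤
          C * (∑ x : Fin d → F, ‖f x‖ ^ 2 * surfMeasure E x) ^ ((1 : ℝ) / 2) := by
  refine ⟨(2 / c ^ 2) ^ ((1 : ℝ) / 8), fun F _ _ _ χ hχ E hE hcard f => ?_⟩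
  set M := ∑ x, ‖f x‖ ^ 2 * surfMeasure E x
  have hM : 0 ≤ M := sum_nonneg fun x _ => mul_nonneg (sq_nonneg _) (surfMeasure_nonneg E x)
  have hsize := pow_div_sq_le_one_div_sq (by exact_mod_cast Fintype.card_pos) hc hcard
  have h8 : ∑ ξ, ‖dft χ (fun y => f y * surfMeasure E y) ξ‖ ^ (8 : ℝ) ≤ 2 / c ^ 2 * M ^ 4 :=
    calc ∑ ξ, ‖dft χ (fun y => f y * surfMeasure E y) ξ‖ ^ (8 : ℝ)
        ≤ 2 * ((Fintype.card F : ℝ) ^ d / #E ^ 2) * M ^ 4 := by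
          simpa only [Real.rpow_ofNat] using IsSidon.sum_norm_dft_surfMeasure_pow_eight_le hχ hE f
      _ ≤ 2 / c ^ 2 * M ^ 4 := by
          rw [← mul_one_div 2]
          gcongr
  calc (∑ ξ, ‖dft χ (fun y => f y * surfMeasure E y) ξ‖ ^ (8 : ℝ)) ^ ((1 : ℝ) / 8)
      ≤ (2 / c ^ 2 * M ^ 4) ^ ((1 : ℝ) / 8) := by gcongr
    _ = (2 / c ^ 2) ^ ((1 : ℝ) / 8) * M ^ ((1 : ℝ) / 2) := by
        rw [Real.mul_rpow (by positivity) (by positivity), ← Real.rpow_natCast M 4,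
          ← Real.rpow_mul hM]
        norm_num

/-- Restriction (extension) estimate for large Sidon sets: for every `c > 0`
there is `C = C(c,d)`, independent of the field, such that whenever `E ⊆ F^d` is a
Sidon set with `|E| ≥ c|F|^{d/2}` and `μ` is its surface measure,
`‖(fμ)^∧‖_{L^8(F^d)} ≤ C ‖f‖_{L²(μ)}` for all `f : F^d → ℂ`. -/
theorem sidon_extension (d : ℕ) (hd : 1 ≤ d) (c : ℝ) (hc : 0 < c) :
    ∃ C : ℝ, ∀ (F : Type) [Field F] [Fintype F] [DecidableEq F] (χ : AddChar F ℂ),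
      χ ≠ 1 → ∀ E : Finset (Fin d → F),
      (∀ a ∈ E, ∀ b ∈ E, ∀ c' ∈ E, ∀ e ∈ E,
        a + b = c' + e → (a = c' ∧ b = e) ∨ (a = e ∧ b = c')) →
      c * (Fintype.card F : ℝ) ^ ((d : ℝ) / 2) ≤ E.card →
      ∀ f : (Fin d → F) → ℂ,
        (∑ x : Fin d → F,
            ‖dft χ (fun y => f y * surfMeasure E y) x‖ ^ (8 : ℝ)) ^
            ((1 : ℝ) / 8) ≤
          C * (∑ x : Fin d → F, ‖f x‖ ^ 2 * surfMeasure E x) ^ ((1 : ℝ) / 2) :=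
  sidon_extension_general d c hc
end
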